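/- arXiv:2002.00550 — 6 statements merged into one kernel-verified Lean document; each statement's English description precedes it below -/
import Mathlib

section
/- For every natural number m ≥ 0, ∑_{k=0}^{m} C(m,k) · (B_{2m−k+1}/(2m−k+1)) · 2^k = ((−1)^m/2) · ( 1 − 2^{2m+1} · Γ(1+m)² / Γ(2m+2) ), where Γ is the Gamma function; equivalently the right-hand side equals ((−1)^m/2) · ( 1 − 2^{2m+1} · (m!)² / (2m+1)! ). -/
/-!
Put `f(x) = xᵐ (x + 2)ᵐ`. The sum is `G(0)` for
`G = ∑ₖ C(m,k) 2ᵏ B_{2m+1-k}(x) / (2m+1-k)`, which solves `G(x + 1) - G(x) = f(x)`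
because `B_n(x + 1) - B_n(x) = n xⁿ⁻¹`.
As `f(-2 - x) = f(x)`, the polynomial `G(x) + G(-1 - x)` is `1`-periodic, hence a constant `c`,
and `G(0) - G(-1) = f(-1) = (-1)ᵐ` gives `2 G(0) = (-1)ᵐ + c`.
Integrating over `[0, 1]`, where `∫ G = 0`, yields `c = ∫_{-2}^{-1} G = -∫_{-2}^0 f`,
a Beta integral equal to `-(-1)ᵐ 2^{2m+1} m!² / (2m+1)!`.
-/

open Finset Nat

namespace Polynomial

section Reflection

variable {R : Type*} [CommRing R] [IsDomain R] [CharZero R]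

theorem eq_C_of_eval_add_one_eq {p : R[X]} (h : ∀ x, p.eval (x + 1) = p.eval x) :
    p = C (p.eval 0) := by
  have hnat (n : ℕ) : p.eval (n : R) = p.eval 0 := by
    induction n with
    | zero => simp
    | succ n ih => rw [Nat.cast_succ, h, ih]
  refine eq_of_infinite_eval_eq _ _ ((Set.infinite_range_of_injective Nat.cast_injective).mono ?_)
  rintro _ ⟨n, rfl⟩
  simp [hnat n]

theorem add_comp_neg_one_sub_X_eq_C {f G : R[X]}
    (hG : ∀ x, G.eval (x + 1) = G.eval x + f.eval x) (hf : ∀ x, f.eval (-2 - x) = f.eval x) :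
    G + G.comp (-1 - X) = C (G.eval 0 + G.eval (-1)) := by
  have hK : ∀ x, (G + G.comp (-1 - X)).eval (x + 1) = (G + G.comp (-1 - X)).eval x := by
    intro x
    simp only [eval_add, eval_comp, eval_sub, eval_neg, eval_one, eval_X]
    rw [show -1 - (x + 1) = -2 - x by ring, show -1 - x = -2 - x + 1 by ring, hG, hG, hf]
    ring
  simpa using eq_C_of_eval_add_one_eq hK

/-- Integrate `G(x) + G(-1 - x) = c` over `[0, 1]`. -/
theorem eval_neg_one_sub_eval_neg_two {G A : R[X]} {c : R} (hA : derivative A = G)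
    (hA₁ : A.eval 1 = A.eval 0) (hG : G + G.comp (-1 - X) = C c) :
    A.eval (-1) - A.eval (-2) = c := by
  set W := A - A.comp (-1 - X) - C c * X
  have hW : derivative W = 0 := by
    have hq : derivative (-1 - X : R[X]) = -1 := by simp
    rw [derivative_sub, derivative_sub, derivative_comp, hq, derivative_C_mul_X, hA, ← hG]
    ring
  have h₁₀ : W.eval 1 = W.eval 0 := by rw [eq_C_of_derivative_eq_zero hW]; simp
  simp only [W, eval_sub, eval_comp, eval_mul, eval_C, eval_X] at h₁₀
  norm_num at h₁₀
  linear_combination h₁₀ - hA₁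

theorem two_mul_eval_zero_of_symmetric {f G A : R[X]}
    (hG : ∀ x, G.eval (x + 1) = G.eval x + f.eval x) (hf : ∀ x, f.eval (-2 - x) = f.eval x)
    (hA : derivative A = G) (hA₁ : A.eval 1 = A.eval 0) :
    2 * G.eval 0 = f.eval (-1) + (A.eval (-1) - A.eval (-2)) := by
  rw [eval_neg_one_sub_eval_neg_two hA hA₁ (add_comp_neg_one_sub_X_eq_C hG hf)]
  have h := hG (-1)
  rw [neg_add_cancel] at h
  linear_combination h

end Reflection

section BernoulliCombination

variable {ι : Type*} (s : Finset ι) (c : ι → ℚ) (n : ι → ℕ)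

theorem sum_smul_bernoulli_eval_one_add (x : ℚ) :
    (∑ i ∈ s, c i • bernoulli (n i)).eval (1 + x) =
      (∑ i ∈ s, c i • bernoulli (n i)).eval x + ∑ i ∈ s, c i * n i * x ^ (n i - 1) := by
  simp only [eval_finsetSum, eval_smul, bernoulli_eval_one_add, smul_eq_mul, mul_add,
    sum_add_distrib, mul_assoc]

theorem derivative_sum_smul_bernoulli_succ :
    derivative (∑ i ∈ s, (c i / (n i + 1)) • bernoulli (n i + 1)) =
      ∑ i ∈ s, c i • bernoulli (n i) := by
  rw [derivative_sum]
  refine sum_congr rfl fun i _ => ?_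
  rw [derivative_smul, derivative_bernoulli_add_one, ← C_eq_natCast, ← C_1, ← C_add,
    ← smul_eq_C_mul, smul_smul, div_mul_cancel₀ _ (by positivity)]

end BernoulliCombination

end Polynomial

/-- The Beta integral `∫₀¹ tᵃ (t - 1)ⁿ dt`, expanded binomially. -/
theorem sum_range_choose_mul_neg_one_pow_div (n a : ℕ) :
    ∑ i ∈ range (n + 1), (n.choose i : ℚ) * ((-1) ^ i / (a + 1 + (n - i) : ℕ)) =
      (-1) ^ n * n ! * a ! / (a + n + 1)! := by
  induction n generalizing a with
  | zero => simp [Nat.factorial_succ]; field_simp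
  | succ n ih =>
    have hpascal := sum_choose_succ_mul (fun i j => ((-1 : ℚ) ^ i / (a + 1 + j : ℕ))) n
    have hshift :
        ∑ i ∈ range (n + 1), (n.choose i : ℚ) * ((-1) ^ i / (a + 1 + (n + 1 - i) : ℕ)) =
        ∑ i ∈ range (n + 1), (n.choose i : ℚ) * ((-1) ^ i / (a + 1 + 1 + (n - i) : ℕ)) :=
      sum_congr rfl fun i hi => by
        rw [show a + 1 + (n + 1 - i) = a + 1 + 1 + (n - i) by grind]
    simp only [pow_succ, mul_neg, mul_one, neg_div, sum_neg_distrib] at hpascal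
    rw [hpascal, hshift, ih, ih, ← sub_eq_add_neg,
      show a + 1 + n + 1 = a + n + 1 + 1 by ring, show a + (n + 1) + 1 = a + n + 1 + 1 by ring,
      Nat.factorial_succ (a + n + 1), Nat.factorial_succ a, Nat.factorial_succ n]
    push_cast
    field_simp
    ring

section

open Polynomial

noncomputable def bernoulliIndefSum (m : ℕ) : ℚ[X] :=
  ∑ k ∈ range (m + 1),
    (m.choose k * 2 ^ k / (2 * m - k + 1 : ℕ) : ℚ) • Polynomial.bernoulli (2 * m - k + 1)

noncomputable def bernoulliIndefSumAntideriv (m : ℕ) : ℚ[X] :=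
  ∑ k ∈ range (m + 1),
    (m.choose k * 2 ^ k / (2 * m - k + 1 : ℕ) / ((2 * m - k + 1 : ℕ) + 1) : ℚ) •
      Polynomial.bernoulli (2 * m - k + 1 + 1)

theorem bernoulliIndefSum_eval_add_one (m : ℕ) (x : ℚ) :
    (bernoulliIndefSum m).eval (x + 1) =
      (bernoulliIndefSum m).eval x + (X ^ m * (X + 2) ^ m : ℚ[X]).eval x := by
  rw [add_comm x, bernoulliIndefSum, sum_smul_bernoulli_eval_one_add]
  congr 1
  simp only [eval_mul, eval_pow, eval_add, eval_X, eval_ofNat]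
  rw [add_comm x 2, add_pow, mul_sum]
  refine sum_congr rfl fun k hk => ?_
  have hk : k ≤ m := Nat.lt_succ_iff.mp (mem_range.mp hk)
  rw [Nat.add_sub_cancel, show 2 * m - k = m + (m - k) by omega, pow_add]
  field_simp

theorem derivative_bernoulliIndefSumAntideriv (m : ℕ) :
    derivative (bernoulliIndefSumAntideriv m) = bernoulliIndefSum m :=
  derivative_sum_smul_bernoulli_succ _ _ _

theorem bernoulliIndefSumAntideriv_eval_one (m : ℕ) :
    (bernoulliIndefSumAntideriv m).eval 1 = (bernoulliIndefSumAntideriv m).eval 0 := by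
  have h := sum_smul_bernoulli_eval_one_add (range (m + 1))
    (fun k => (m.choose k * 2 ^ k / (2 * m - k + 1 : ℕ) / ((2 * m - k + 1 : ℕ) + 1) : ℚ))
    (fun k => 2 * m - k + 1 + 1) 0
  simpa [bernoulliIndefSumAntideriv] using h

theorem bernoulliIndefSumAntideriv_eval_neg_one_sub (m : ℕ) :
    (bernoulliIndefSumAntideriv m).eval (-1) - (bernoulliIndefSumAntideriv m).eval (-2) =
      -2 ^ (2 * m + 1) * ((-1) ^ m * m ! * m ! / (2 * m + 1)!) := by
  have h := sum_smul_bernoulli_eval_one_add (range (m + 1))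
    (fun k => (m.choose k * 2 ^ k / (2 * m - k + 1 : ℕ) / ((2 * m - k + 1 : ℕ) + 1) : ℚ))
    (fun k => 2 * m - k + 1 + 1) (-2)
  rw [show (1 : ℚ) + -2 = -1 by norm_num] at h
  rw [bernoulliIndefSumAntideriv, h, add_sub_cancel_left,
    show 2 * m + 1 = m + m + 1 by ring, ← sum_range_choose_mul_neg_one_pow_div, mul_sum]
  refine sum_congr rfl fun k hk => ?_
  have hk : k ≤ m := Nat.lt_succ_iff.mp (mem_range.mp hk)
  have hsign : (-2 : ℚ) ^ (2 * m - k + 1) * 2 ^ k = -2 ^ (m + m + 1) * (-1) ^ k := by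
    rw [show 2 * m - k + 1 = 2 * (m - k) + 1 + k by omega,
      show m + m + 1 = 2 * (m - k) + 1 + k + k by omega]
    simp only [pow_add, pow_mul, neg_sq, neg_pow (2 : ℚ)]
    ring
  rw [Nat.add_sub_cancel, show m + 1 + (m - k) = 2 * m - k + 1 by omega]
  push_cast
  field_simp
  linear_combination (m.choose k : ℚ) * hsign

theorem bernoulliIndefSum_eval_zero (m : ℕ) :
    (bernoulliIndefSum m).eval 0 = ∑ k ∈ range (m + 1),
      (m.choose k : ℚ) * (_root_.bernoulli (2 * m - k + 1) / (2 * m - k + 1 : ℕ)) * 2 ^ k := by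
  simp only [bernoulliIndefSum, eval_finsetSum, eval_smul, bernoulli_eval_zero, smul_eq_mul]
  exact sum_congr rfl fun k _ => by ring

theorem sum_choose_mul_bernoulli_div_mul_two_pow (m : ℕ) :
    ∑ k ∈ range (m + 1),
        (m.choose k : ℚ) * (_root_.bernoulli (2 * m - k + 1) / (2 * m - k + 1 : ℕ)) * 2 ^ k =
      (-1) ^ m / 2 * (1 - 2 ^ (2 * m + 1) * m ! ^ 2 / (2 * m + 1)!) := by
  have hf (x : ℚ) :
      (X ^ m * (X + 2) ^ m : ℚ[X]).eval (-2 - x) = (X ^ m * (X + 2) ^ m).eval x := by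
    simp only [eval_mul, eval_pow, eval_add, eval_X, eval_ofNat, ← mul_pow]
    ring
  have h := two_mul_eval_zero_of_symmetric (bernoulliIndefSum_eval_add_one m) hf
    (derivative_bernoulliIndefSumAntideriv m) (bernoulliIndefSumAntideriv_eval_one m)
  have hf_neg_one : (X ^ m * (X + 2) ^ m : ℚ[X]).eval (-1) = (-1) ^ m := by norm_num
  rw [bernoulliIndefSumAntideriv_eval_neg_one_sub, bernoulliIndefSum_eval_zero, hf_neg_one] at h
  linear_combination h / 2

end

theorem stmt_1 (m : ℕ) :
    ∑ k ∈ Finset.range (m + 1),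
        (m.choose k : ℝ) * ((bernoulli (2 * m - k + 1) : ℝ) / (2 * m - k + 1)) * 2 ^ k
      = (-1) ^ m / 2 *
          (1 - 2 ^ (2 * m + 1) * Real.Gamma (1 + m) ^ 2 / Real.Gamma (2 * m + 2)) := by
  have h := congrArg (Rat.cast : ℚ → ℝ) (sum_choose_mul_bernoulli_div_mul_two_pow m)
  push_cast at h
  rw [add_comm 1, Real.Gamma_nat_eq_factorial,
    show (2 * m + 2 : ℝ) = (2 * m + 1 : ℕ) + 1 by push_cast; ring,
    Real.Gamma_nat_eq_factorial, ← h]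
  refine sum_congr rfl fun k hk => ?_
  rw [Nat.cast_sub (by grind : k ≤ 2 * m)]
  push_cast
  rfl
end

section
/- For every positive natural number m and every natural number n ≥ 2, the two-sided power sum satisfies ∑_{k=1}^{n−1} k^m (n−k)^m = n^{2m+1}/((2m+1)·C(2m,m)) + 2·(−1)^m · ∑_{k=0}^{m} C(m,k) · (B_{m+k+1}/(m+k+1)) · n^{m−k}. -/
open Finset


lemma pf (m : ℕ) : ∀ a : ℚ, (∀ t ∈ Finset.range (m+1), a + t ≠ 0) →
    ∑ j ∈ Finset.range (m+1), (-1:ℚ)^j * (m.choose j) / (a + j)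
      = m.factorial / ∏ t ∈ Finset.range (m+1), (a + t) := by
  induction m with
  | zero => intro a ha; simp
  | succ m ih =>
    intro a ha
    have ha' : ∀ t : ℕ, t ≤ m + 1 → a + t ≠ 0 := fun t ht => ha t (by simp; omega)
    have ha0 : a ≠ 0 := by simpa using ha' 0 (by omega)
    have haQ : ∀ t ∈ Finset.range (m+1), (a+1) + (t:ℚ) ≠ 0 := by
      intro t ht
      have h := ha' (t+1) (by simp at ht; omega)
      push_cast at h
      intro hc; exact h (by linarith)
    have haP : ∀ t ∈ Finset.range (m+1), a + (t:ℚ) ≠ 0 := by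
      intro t ht; exact ha' t (by simp at ht; omega)
    have hT : ∑ j ∈ Finset.range (m+1), (-1:ℚ)^j * (m.choose (j+1)) / (a + ((j:ℚ)+1))
        = ∑ j ∈ Finset.range m, (-1:ℚ)^j * (m.choose (j+1)) / (a + ((j:ℚ)+1)) := by
      rw [Finset.sum_range_succ]; simp [Nat.choose_succ_self]
    have e1 : ∑ j ∈ Finset.range (m+2), (-1:ℚ)^j * ((m+1).choose j) / (a + j)
        = (∑ j ∈ Finset.range (m+1),
            (-((-1:ℚ)^j * (m.choose j) / ((a+1) + j)) - (-1:ℚ)^j * (m.choose (j+1)) / (a + ((j:ℚ)+1)))) + 1/a := by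
      rw [Finset.sum_range_succ' (fun j => (-1:ℚ)^j * ((m+1).choose j) / (a + j)) (m+1)]
      push_cast
      congr 1
      · refine Finset.sum_congr rfl ?_
        intro j hj
        have h1 : a + ((j:ℚ)+1) ≠ 0 := by
          have h := ha' (j+1) (by simp at hj; omega); push_cast at h; exact h
        have h2 : (a+1) + (j:ℚ) ≠ 0 := haQ j hj
        rw [Nat.choose_succ_succ]
        push_cast
        field_simp
        ring
      · norm_num
    have e2 : ∑ j ∈ Finset.range (m+1), (-1:ℚ)^j * (m.choose j) / (a + j)
        = (∑ j ∈ Finset.range m, -((-1:ℚ)^j * (m.choose (j+1)) / (a + ((j:ℚ)+1)))) + 1/a := by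
      rw [Finset.sum_range_succ' (fun j => (-1:ℚ)^j * (m.choose j) / (a + j)) m]
      push_cast
      congr 1
      · refine Finset.sum_congr rfl ?_
        intro j hj
        rw [pow_succ]
        ring
      · norm_num
    have key : ∑ j ∈ Finset.range (m+2), (-1:ℚ)^j * ((m+1).choose j) / (a + j)
        = (∑ j ∈ Finset.range (m+1), (-1:ℚ)^j * (m.choose j) / (a + j))
          - ∑ j ∈ Finset.range (m+1), (-1:ℚ)^j * (m.choose j) / ((a+1) + j) := by
      rw [e1, Finset.sum_sub_distrib, Finset.sum_neg_distrib, hT, e2, Finset.sum_neg_distrib]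
      ring
    have ihQ := ih (a+1) haQ
    have ihP := ih a haP
    rw [key, ihP, ihQ]
    have hP : (∏ t ∈ Finset.range (m+1), (a + t)) ≠ 0 := Finset.prod_ne_zero_iff.mpr haP
    have hQ : (∏ t ∈ Finset.range (m+1), ((a+1) + t)) ≠ 0 := Finset.prod_ne_zero_iff.mpr haQ
    have hrel : (∏ t ∈ Finset.range (m+1), (a + t)) * (a + ((m:ℚ)+1))
        = a * ∏ t ∈ Finset.range (m+1), ((a+1) + t) := by
      have l := Finset.prod_range_succ (fun t : ℕ => a + (t:ℚ)) (m+1)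
      have r := Finset.prod_range_succ' (fun t : ℕ => a + (t:ℚ)) (m+1)
      push_cast at l r
      rw [l] at r
      rw [r]
      rw [Finset.prod_congr rfl (fun t _ => by push_cast; ring : ∀ t ∈ Finset.range (m+1), a + ((t:ℚ)+1) = (a+1) + t)]
      ring
    have hlast : a + ((m:ℚ)+1) ≠ 0 := by
      have := ha' (m+1) le_rfl; push_cast at this; exact this
    rw [Finset.prod_range_succ (fun t : ℕ => a + (t:ℚ)) (m+1)]
    push_cast
    rw [Nat.factorial_succ]
    push_cast
    rw [div_sub_div _ _ hP hQ, div_eq_div_iff (mul_ne_zero hP hQ) (mul_ne_zero hP hlast)]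
    linear_combination (-(↑m.factorial : ℚ) * (∏ t ∈ Finset.range (m+1), (a + (t:ℚ)))) * hrel


noncomputable def Jc (p : ℕ) (s : ℤ) : ℚ := if 0 ≤ s then (p.choose s.toNat : ℚ) else 0

lemma Jc_pascal (p : ℕ) (s : ℤ) : Jc (p+1) s = Jc p s + Jc p (s-1) := by
  unfold Jc
  rcases lt_trichotomy s 0 with h | h | h
  · rw [if_neg (by omega), if_neg (by omega), if_neg (by omega)]; ring
  · subst h; norm_num
  · rw [if_pos (by omega), if_pos (by omega), if_pos (by omega)]
    have hs : s.toNat = (s-1).toNat + 1 := by omega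
    rw [hs, Nat.choose_succ_succ]
    push_cast
    ring

lemma Jc_nonneg (p k : ℕ) : Jc p (k : ℤ) = (p.choose k : ℚ) := by
  unfold Jc; rw [if_pos (by positivity)]; simp

lemma Jc_neg (p : ℕ) (s : ℤ) (h : s < 0) : Jc p s = 0 := by
  unfold Jc; rw [if_neg (by omega)]

lemma altvan (m : ℕ) : ∀ p r : ℕ,
    ∑ j ∈ Finset.range (m+1), (-1:ℚ)^j * (m.choose j) * ((p+j).choose r)
      = (-1)^m * Jc p ((r:ℤ) - m) := by
  induction m with
  | zero => intro p r; simp [Jc_nonneg]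
  | succ m ih =>
    intro p r
    have e1 : ∑ j ∈ Finset.range (m+2), (-1:ℚ)^j * ((m+1).choose j) * ((p+j).choose r)
        = (∑ j ∈ Finset.range (m+1),
            (-((-1:ℚ)^j * (m.choose j) * (((p+1)+j).choose r)) - (-1:ℚ)^j * (m.choose (j+1)) * ((p+(j+1)).choose r))) + (p.choose r) := by
      rw [Finset.sum_range_succ' (fun j => (-1:ℚ)^j * ((m+1).choose j) * ((p+j).choose r)) (m+1)]
      congr 1
      · refine Finset.sum_congr rfl ?_
        intro j hj
        rw [Nat.choose_succ_succ]
        have : (p+1)+j = p+(j+1) := by omega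
        rw [this]
        push_cast
        ring
      · norm_num
    have e2 : ∑ j ∈ Finset.range (m+1), (-1:ℚ)^j * (m.choose j) * ((p+j).choose r)
        = (∑ j ∈ Finset.range m, -((-1:ℚ)^j * (m.choose (j+1)) * ((p+(j+1)).choose r))) + (p.choose r) := by
      rw [Finset.sum_range_succ' (fun j => (-1:ℚ)^j * (m.choose j) * ((p+j).choose r)) m]
      congr 1
      · refine Finset.sum_congr rfl ?_
        intro j hj
        rw [pow_succ]
        ring
      · norm_num
    have hT : ∑ j ∈ Finset.range (m+1), (-1:ℚ)^j * (m.choose (j+1)) * ((p+(j+1)).choose r)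
        = ∑ j ∈ Finset.range m, (-1:ℚ)^j * (m.choose (j+1)) * ((p+(j+1)).choose r) := by
      rw [Finset.sum_range_succ]; simp [Nat.choose_succ_self]
    have key : ∑ j ∈ Finset.range (m+2), (-1:ℚ)^j * ((m+1).choose j) * ((p+j).choose r)
        = (∑ j ∈ Finset.range (m+1), (-1:ℚ)^j * (m.choose j) * ((p+j).choose r))
          - ∑ j ∈ Finset.range (m+1), (-1:ℚ)^j * (m.choose j) * (((p+1)+j).choose r) := by
      rw [e1, Finset.sum_sub_distrib, Finset.sum_neg_distrib, hT, e2, Finset.sum_neg_distrib]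
      ring
    rw [key, ih p r, ih (p+1) r]
    push_cast
    have h3 : ((r:ℤ) - ((m:ℤ)+1)) = ((r:ℤ) - m) - 1 := by ring
    rw [h3]
    have : Jc (p+1) ((r:ℤ) - m) = Jc p ((r:ℤ)-m) + Jc p (((r:ℤ)-m)-1) := Jc_pascal p _
    rw [pow_succ]
    linear_combination (-(-1:ℚ)^m) * this

theorem stmt_2 (m n : ℕ) (hm : 0 < m) (hn : 2 ≤ n) :
    ∑ k ∈ Finset.Icc 1 (n - 1), (k : ℚ) ^ m * ((n : ℚ) - (k : ℚ)) ^ m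
      = (n : ℚ) ^ (2 * m + 1) / ((2 * m + 1) * ((2 * m).choose m)) +
        2 * (-1) ^ m *
          ∑ k ∈ Finset.range (m + 1),
            (m.choose k : ℚ) * (bernoulli (m + k + 1) / (m + k + 1)) * (n : ℚ) ^ (m - k) := by
  have h1 : ∑ k ∈ Finset.Icc 1 (n - 1), (k : ℚ) ^ m * ((n : ℚ) - (k : ℚ)) ^ m
      = ∑ k ∈ Finset.range n, (k : ℚ) ^ m * ((n : ℚ) - (k : ℚ)) ^ m := by
    have hIcc : Finset.Icc 1 (n-1) = Finset.Ico 1 n := by ext k; simp; omega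
    rw [hIcc, Finset.range_eq_Ico,
      Finset.sum_eq_sum_Ico_succ_bot (by omega : 0 < n)
        (fun k => (k : ℚ) ^ m * ((n : ℚ) - (k : ℚ)) ^ m)]
    rw [Nat.cast_zero, zero_pow (by omega : m ≠ 0)]
    ring
  have h2 : ∀ k : ℕ, (k : ℚ) ^ m * ((n : ℚ) - (k : ℚ)) ^ m
      = ∑ j ∈ Finset.range (m+1), (-1:ℚ)^j * (m.choose j) * (n:ℚ)^(m-j) * (k:ℚ)^(m+j) := by
    intro k
    have hx : ((n:ℚ) - k) = (-(k:ℚ)) + n := by ring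
    rw [hx, add_pow, Finset.mul_sum]
    refine Finset.sum_congr rfl ?_
    intro j hj
    rw [neg_pow, pow_add]
    ring
  have h3 : ∑ k ∈ Finset.range n, (k : ℚ)^m * ((n:ℚ)-(k:ℚ))^m
      = ∑ j ∈ Finset.range (m+1), ∑ i ∈ Finset.range (m+j+1),
          (-1:ℚ)^j * (m.choose j) * (n:ℚ)^(m-j) *
            (bernoulli i * (((m+j)+1).choose i) * (n:ℚ)^((m+j)+1-i) / ((m+j:ℚ)+1)) := by
    rw [Finset.sum_congr rfl (fun k _ => h2 k), Finset.sum_comm]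
    refine Finset.sum_congr rfl ?_
    intro j hj
    rw [← Finset.mul_sum, sum_range_pow n (m+j), Finset.mul_sum]
    refine Finset.sum_congr rfl ?_
    intro i hi
    push_cast
    ring
  have h3' := h1.trans h3
  set T : ℕ → ℕ → ℚ := fun j i =>
    (-1:ℚ)^j * (m.choose j) * (n:ℚ)^(m-j) *
      (bernoulli i * (((m+j)+1).choose i) * (n:ℚ)^((m+j)+1-i) / ((m+j:ℚ)+1)) with hTdef
  have h4 : ∀ j ∈ Finset.range (m+1),
      ∑ i ∈ Finset.range (m+j+1), T j i
        = (∑ i ∈ Finset.range (2*m+2), T j i) - T j (m+j+1) := by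
    intro j hj
    simp only [Finset.mem_range] at hj
    have hsub : Finset.range (m+j+2) ⊆ Finset.range (2*m+2) :=
      Finset.range_subset_range.mpr (by omega)
    have hz : ∀ i ∈ Finset.range (2*m+2), i ∉ Finset.range (m+j+2) → T j i = 0 := by
      intro i hi hni
      simp only [Finset.mem_range] at hi hni
      have hc : (m+j+1).choose i = 0 := Nat.choose_eq_zero_of_lt (by omega)
      simp [hTdef, hc]
    rw [← Finset.sum_subset hsub hz, Finset.sum_range_succ (T j) (m+j+1)]
    ring
  have h5 : ∑ j ∈ Finset.range (m+1), T j (m+j+1)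
      = -((-1:ℚ)^m * ∑ k ∈ Finset.range (m + 1),
          (m.choose k : ℚ) * (bernoulli (m + k + 1) / (m + k + 1)) * (n : ℚ) ^ (m - k)) := by
    rw [Finset.mul_sum, ← Finset.sum_neg_distrib]
    refine Finset.sum_congr rfl ?_
    intro j hj
    simp only [hTdef]
    rw [Nat.choose_self, Nat.sub_self, pow_zero]
    rcases Nat.even_or_odd (m+j) with he | ho
    · have hb : bernoulli (m+j+1) = 0 := by
        rw [bernoulli_eq_bernoulli'_of_ne_one (by omega)]
        exact bernoulli'_eq_zero_of_odd he.add_one (by omega)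
      simp [hb]
    · have hpow : (-1:ℚ)^(m+j) = -1 := ho.neg_one_pow
      rw [pow_add] at hpow
      have hsq : ((-1:ℚ)^m) * ((-1:ℚ)^m) = 1 := by
        rw [← mul_pow]; norm_num
      have hj2 : (-1:ℚ)^j = -(-1:ℚ)^m := by
        calc (-1:ℚ)^j = ((-1:ℚ)^m * (-1:ℚ)^m) * (-1:ℚ)^j := by rw [hsq, one_mul]
          _ = (-1:ℚ)^m * ((-1:ℚ)^m * (-1:ℚ)^j) := by ring
          _ = -(-1:ℚ)^m := by rw [hpow]; ring
      rw [hj2]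
      push_cast
      ring
  have h7 : ∀ i ∈ Finset.range (2*m+2), ∑ j ∈ Finset.range (m+1), T j i
      = bernoulli i * (n:ℚ)^(2*m+1-i) *
          ∑ j ∈ Finset.range (m+1),
            (-1:ℚ)^j * (m.choose j) * (((m+j)+1).choose i) / ((m+j:ℚ)+1) := by
    intro i hi
    rw [Finset.mul_sum]
    refine Finset.sum_congr rfl ?_
    intro j hj
    simp only [hTdef]
    simp only [Finset.mem_range] at hi hj
    rcases le_or_gt i (m+j+1) with hle | hlt
    · have hexp : (m-j) + ((m+j)+1-i) = 2*m+1-i := by omega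
      rw [← hexp, pow_add]
      ring
    · have hc : (m+j+1).choose i = 0 := Nat.choose_eq_zero_of_lt hlt
      simp [hc]
  have h8 : ∑ j ∈ Finset.range (m+1),
        (-1:ℚ)^j * (m.choose j) * (((m+j)+1).choose 0) / ((m+j:ℚ)+1)
      = 1 / (((2*m+1):ℚ) * ((2*m).choose m)) := by
    have hpf := pf m ((m:ℚ)+1) (fun t ht => by positivity)
    have e : ∑ j ∈ Finset.range (m+1),
          (-1:ℚ)^j * (m.choose j) * (((m+j)+1).choose 0) / ((m+j:ℚ)+1)
        = ∑ j ∈ Finset.range (m+1), (-1:ℚ)^j * (m.choose j) / (((m:ℚ)+1) + j) := by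
      refine Finset.sum_congr rfl ?_
      intro j hj
      rw [Nat.choose_zero_right]
      push_cast
      ring_nf
    rw [e, hpf]
    have hnat : m.factorial * ∏ t ∈ Finset.range (m+1), (m+1+t) = (2*m+1).factorial := by
      have e2 : ∏ t ∈ Finset.range (m+1), (m+1+t) = ∏ i ∈ Finset.Ico (m+1) (2*m+2), i := by
        rw [Finset.prod_Ico_eq_prod_range]
        have : 2*m+2-(m+1) = m+1 := by omega
        rw [this]
      have e3 : (∏ i ∈ Finset.Ico 1 (m+1+1), i) = (m+1).factorial := Finset.prod_Ico_id_eq_factorial (m+1)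
      have e4 := Finset.prod_Ico_consecutive (fun i => i) (show 1 ≤ m+1 by omega) (show m+1 ≤ 2*m+2 by omega)
      have e5 : (∏ i ∈ Finset.Ico 1 (2*m+1+1), i) = (2*m+1).factorial := Finset.prod_Ico_id_eq_factorial (2*m+1)
      have e6 : (∏ i ∈ Finset.Ico 1 (m+1), i) = m.factorial := by
        have := Finset.prod_Ico_id_eq_factorial m
        simpa using this
      rw [e2, ← e5, ← e6]
      have : 2*m+1+1 = 2*m+2 := by omega
      rw [this, ← e4]
    have hq : (m.factorial : ℚ) * ∏ t ∈ Finset.range (m+1), ((m:ℚ)+1+t) = ((2*m+1).factorial : ℚ) := by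
      have := congrArg (fun x : ℕ => (x : ℚ)) hnat
      push_cast at this
      convert this using 2
    have hch : ((2*m).choose m) * m.factorial * m.factorial = (2*m).factorial := by
      have h := Nat.choose_mul_factorial_mul_factorial (show m ≤ 2*m by omega)
      have : 2*m - m = m := by omega
      rwa [this] at h
    have hfac : (2*m+1).factorial = (2*m+1) * (2*m).factorial := rfl
    have hPne : (∏ t ∈ Finset.range (m+1), ((m:ℚ)+1+t)) ≠ 0 :=
      Finset.prod_ne_zero_iff.mpr (fun t _ => by positivity)
    have hDne : (((2*m+1):ℚ) * ((2*m).choose m)) ≠ 0 := by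
      have : 0 < (2*m).choose m := Nat.choose_pos (by omega)
      positivity
    have hfne : (m.factorial : ℚ) ≠ 0 := by positivity
    rw [div_eq_div_iff hPne hDne]
    apply mul_left_cancel₀ hfne
    have hchq : (((2*m).choose m : ℚ)) * m.factorial * m.factorial = ((2*m).factorial : ℚ) := by
      exact_mod_cast hch
    have hfacq : ((2*m+1).factorial : ℚ) = ((2*m:ℚ)+1) * ((2*m).factorial : ℚ) := by
      exact_mod_cast hfac
    push_cast at hq ⊢
    linear_combination (((2*m:ℚ))+1) * hchq - hq - hfacq
  have h9 : ∀ i ∈ Finset.range (2*m+1),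
      (∑ j ∈ Finset.range (m+1),
        (-1:ℚ)^j * (m.choose j) * (((m+j)+1).choose (i+1)) / ((m+j:ℚ)+1))
      = (-1:ℚ)^m * Jc m ((i:ℤ) - m) / ((i:ℚ)+1) := by
    intro i hi
    have e : ∀ j ∈ Finset.range (m+1),
        (-1:ℚ)^j * (m.choose j) * (((m+j)+1).choose (i+1)) / ((m+j:ℚ)+1)
          = ((-1:ℚ)^j * (m.choose j) * ((m+j).choose i)) / ((i:ℚ)+1) := by
      intro j hj
      have h := Nat.add_one_mul_choose_eq (m+j) i
      have hq : ((m+j:ℚ)+1) * ((m+j).choose i : ℚ) = (((m+j)+1).choose (i+1) : ℚ) * ((i:ℚ)+1) := by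
        exact_mod_cast h
      have d1 : ((m+j:ℚ)+1) ≠ 0 := by positivity
      have d2 : ((i:ℚ)+1) ≠ 0 := by positivity
      rw [div_eq_div_iff d1 d2]
      linear_combination (-(-1:ℚ)^j * (m.choose j)) * hq
    rw [Finset.sum_congr rfl e, ← Finset.sum_div, altvan m m i]
  have h11 : ∑ i ∈ Finset.range (2*m+1), bernoulli (i+1) * (n:ℚ)^(2*m+1-(i+1)) *
      (∑ j ∈ Finset.range (m+1),
        (-1:ℚ)^j * (m.choose j) * (((m+j)+1).choose (i+1)) / ((m+j:ℚ)+1))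
      = (-1:ℚ)^m * ∑ k ∈ Finset.range (m + 1),
          (m.choose k : ℚ) * (bernoulli (m + k + 1) / (m + k + 1)) * (n : ℚ) ^ (m - k) := by
    rw [Finset.sum_congr rfl (fun i hi => by rw [h9 i hi])]
    conv_lhs => rw [Finset.range_eq_Ico]
    rw [← Finset.sum_Ico_consecutive _ (show (0:ℕ) ≤ m by omega) (show m ≤ 2*m+1 by omega)]
    have hz : ∑ i ∈ Finset.Ico 0 m, bernoulli (i+1) * (n:ℚ)^(2*m+1-(i+1)) *
        ((-1:ℚ)^m * Jc m ((i:ℤ) - m) / ((i:ℚ)+1)) = 0 := by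
      refine Finset.sum_eq_zero ?_
      intro i hi
      simp only [Finset.mem_Ico] at hi
      rw [Jc_neg m _ (by omega)]
      simp
    rw [hz, zero_add, Finset.sum_Ico_eq_sum_range]
    have h2m : 2*m+1-m = m+1 := by omega
    rw [h2m, Finset.mul_sum]
    refine Finset.sum_congr rfl ?_
    intro k hk
    simp only [Finset.mem_range] at hk
    have e1 : ((m+k:ℕ):ℤ) - (m:ℤ) = (k:ℤ) := by push_cast; ring
    rw [e1, Jc_nonneg]
    have e2 : 2*m+1-((m+k)+1) = m-k := by omega
    rw [e2]
    push_cast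
    ring
  rw [h3']
  show (∑ j ∈ Finset.range (m+1), ∑ i ∈ Finset.range (m+j+1), T j i) = _
  rw [Finset.sum_congr rfl h4, Finset.sum_sub_distrib, h5, sub_neg_eq_add, Finset.sum_comm,
    Finset.sum_congr rfl h7,
    Finset.sum_range_succ' (fun i => bernoulli i * (n:ℚ)^(2*m+1-i) *
      ∑ j ∈ Finset.range (m+1),
        (-1:ℚ)^j * (m.choose j) * (((m+j)+1).choose i) / ((m+j:ℚ)+1)) (2*m+1),
    h11, h8, bernoulli_zero, Nat.sub_zero]
  ring
end

section
/- For every positive natural number m and every natural number n ≥ 2, the two-sided power sum satisfies ∑_{k=1}^{n−1} k^m (n−k)^m = n^{2m+1}/((2m+1)·C(2m,m)) − 2·(−1)^m · ∑_{k=0}^{m} C(m,k) · ζ(−m−k) · n^{m−k}, where ζ is the Riemann zeta function (evaluated at negative integers via analytic continuation). -/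
/-!
Expanding `(n - k)^m` binomially and summing each power `k^(m+j)` over `k < n` by Faulhaber's
formula `(p + 1) ∑_{k<n} k^p = B_{p+1}(n) - B_{p+1}` writes the sum as
`∑_j (-1)^j C(m,j) n^(m-j) (B_{m+j+1}(n) - B_{m+j+1}) / (m+j+1)`. Expanding the Bernoulli
polynomials and collecting the coefficient of `B_i n^(2m+1-i)` leaves two alternating binomial
sums: for `i = 0` the Beta integral `∑_j (-1)^j C(m,j) / (m+j+1) = m!² / (2m+1)!`, and for
`i ≥ 1` the coefficient of `x^(i-1)` in `(1+x)^m (1 - (1+x))^m`, which is nonzero only for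
`i > m`. Both resulting families of `B_{m+k+1}` terms are `ζ(-m-k)` up to sign, and since
`B_{m+k+1}` vanishes unless `m + k` is odd, their signs agree.
-/

open Finset Nat fwdDiff

theorem fwdDiff_iter_inv_add_one {K : Type*} [Field K] [CharZero K] (b a : ℕ) :
    Δ_[1] ^[b] (fun x : ℕ ↦ ((x : K) + 1)⁻¹) a = (-1) ^ b * b ! * a ! / (a + b + 1)! := by
  induction b generalizing a with
  | zero =>
    have : (a ! : K) ≠ 0 := Nat.cast_ne_zero.2 a.factorial_ne_zero
    simp [Nat.factorial_succ]
    field_simp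
  | succ b ih =>
    rw [Function.iterate_succ_apply', fwdDiff, ih, ih,
      show a + 1 + b + 1 = (a + b + 1) + 1 by ring, show a + (b + 1) + 1 = (a + b + 1) + 1 by ring,
      Nat.factorial_succ (a + b + 1), Nat.factorial_succ a, Nat.factorial_succ b]
    have : ((a + b + 1)! : K) ≠ 0 := Nat.cast_ne_zero.2 (a + b + 1).factorial_ne_zero
    have : (a + b + 1 + 1 : K) ≠ 0 := by exact_mod_cast (a + b + 1).succ_ne_zero
    push_cast
    field_simp
    ring

theorem sum_neg_one_pow_mul_choose_div {K : Type*} [Field K] [CharZero K] (a b : ℕ) :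
    ∑ k ∈ range (b + 1), (-1 : K) ^ k * b.choose k / (a + k + 1)
      = a ! * b ! / (a + b + 1)! := by
  have sq (n : ℕ) : (-1 : K) ^ n * (-1) ^ n = 1 := by rw [← mul_pow]; norm_num
  have h := fwdDiff_iter_eq_sum_shift (1 : ℕ) (fun x : ℕ ↦ ((x : K) + 1)⁻¹) b a
  have hsign : ∀ k ∈ range (b + 1),
      ((-1 : ℤ) ^ (b - k) * b.choose k) • (((a + k • 1 : ℕ) : K) + 1)⁻¹
        = (-1) ^ b * ((-1 : K) ^ k * b.choose k / (a + k + 1)) := by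
    intro k hk
    have hb : (-1 : K) ^ b = (-1) ^ (b - k) * (-1) ^ k := by
      rw [← pow_add, Nat.sub_add_cancel (Nat.lt_succ_iff.1 (mem_range.1 hk))]
    rw [zsmul_eq_mul, smul_eq_mul, mul_one, hb]
    push_cast
    linear_combination (-(-1 : K) ^ (b - k) * b.choose k / (a + k + 1)) * sq k
  rw [fwdDiff_iter_inv_add_one, sum_congr rfl hsign, ← mul_sum] at h
  linear_combination (-(-1 : K) ^ b) * h
    + (a ! * b ! / (a + b + 1)! - ∑ k ∈ range (b + 1), (-1 : K) ^ k * b.choose k / (a + k + 1))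
      * sq b

open Polynomial in
theorem sum_neg_one_pow_mul_choose_mul_choose_add {R : Type*} [CommRing R] (m r : ℕ) :
    ∑ j ∈ range (m + 1), (-1 : R) ^ j * m.choose j * (m + j).choose r
      = (-1) ^ m * if m ≤ r then (m.choose (r - m) : R) else 0 := by
  have h : ∑ j ∈ range (m + 1), C ((-1 : R) ^ j * m.choose j) * (X + 1) ^ (m + j)
      = C ((-1) ^ m) * (X ^ m * (X + 1) ^ m) := by
    simp only [map_mul, map_pow, map_neg, map_one, map_natCast]
    calc _ = (X + 1) ^ m * (-(X + 1) + 1) ^ m := by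
          rw [add_pow (-(X + 1)) 1 m, mul_sum]
          refine sum_congr rfl fun j _ ↦ ?_
          rw [one_pow, mul_one, neg_pow (X + 1 : R[X]) j, pow_add]
          ring
      _ = _ := by ring
  simpa only [finsetSum_coeff, coeff_C_mul, coeff_X_pow_mul', coeff_X_add_one_pow]
    using congrArg (coeff · r) h

theorem sum_neg_one_pow_mul_choose_mul_choose_succ_div {K : Type*} [Field K] [CharZero K]
    (m i : ℕ) :
    ∑ j ∈ range (m + 1), (-1 : K) ^ j * m.choose j * (m + j + 1).choose (i + 1) / (m + j + 1)
      = (-1) ^ m * (if m ≤ i then (m.choose (i - m) : K) else 0) / (i + 1) := by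
  have hi : (i + 1 : K) ≠ 0 := by exact_mod_cast i.succ_ne_zero
  rw [← sum_neg_one_pow_mul_choose_mul_choose_add, sum_div]
  refine sum_congr rfl fun j _ ↦ ?_
  have hj : (m + j + 1 : K) ≠ 0 := by exact_mod_cast (m + j).succ_ne_zero
  have h : ((m + j + 1 : ℕ) : K) * (m + j).choose i
      = (m + j + 1).choose (i + 1) * (i + 1 : ℕ) := by
    exact_mod_cast Nat.add_one_mul_choose_eq (m + j) i
  push_cast at h
  rw [div_eq_div_iff hj hi]
  linear_combination -(-1 : K) ^ j * m.choose j * h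

theorem sum_neg_one_pow_mul_choose_mul_pow_mul_bernoulli_eval (m : ℕ) (x : ℚ) :
    ∑ j ∈ range (m + 1),
        (-1) ^ j * m.choose j * x ^ (m - j) * (Polynomial.bernoulli (m + j + 1)).eval x
          / (m + j + 1)
      = x ^ (2 * m + 1) * (m ! * m ! / (2 * m + 1)!)
        + (-1) ^ m * ∑ k ∈ range (m + 1),
            m.choose k * bernoulli (m + k + 1) * x ^ (m - k) / (m + k + 1) := by
  have expand : ∀ j ∈ range (m + 1),
      (-1) ^ j * m.choose j * x ^ (m - j) * (Polynomial.bernoulli (m + j + 1)).eval x / (m + j + 1)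
        = ∑ i ∈ range (2 * m + 2), (-1) ^ j * m.choose j * (m + j + 1).choose i / (m + j + 1)
            * (bernoulli i * x ^ (2 * m + 1 - i)) := by
    intro j hj
    have hj : j ≤ m := Nat.lt_succ_iff.1 (mem_range.1 hj)
    rw [Polynomial.bernoulli, Polynomial.eval_finsetSum, mul_sum, sum_div]
    refine (sum_congr rfl fun i hi ↦ ?_).trans (sum_subset (range_subset_range.2 (by omega)) ?_)
    · have hi : i ≤ m + j + 1 := Nat.lt_succ_iff.1 (mem_range.1 hi)
      rw [Polynomial.eval_monomial, show 2 * m + 1 - i = (m - j) + (m + j + 1 - i) by omega,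
        pow_add]
      ring
    · intro i _ hi
      rw [mem_range, not_lt] at hi
      simp [Nat.choose_eq_zero_of_lt (show m + j + 1 < i by omega)]
  rw [sum_congr rfl expand, sum_comm, sum_range_succ']
  simp only [← sum_mul, sum_neg_one_pow_mul_choose_mul_choose_succ_div, Nat.choose_zero_right,
    Nat.cast_one, mul_one, bernoulli_zero, one_mul, Nat.sub_zero]
  rw [sum_neg_one_pow_mul_choose_div, ← two_mul, add_comm, show 2 * m + 1 = m + (m + 1) by ring,
    sum_range_add, mul_sum]
  congr 1
  · ring
  · rw [sum_eq_zero fun i hi ↦ by simp [Nat.not_le.2 (mem_range.1 hi)], zero_add]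
    refine sum_congr rfl fun k hk ↦ ?_
    have hk : k ≤ m := Nat.lt_succ_iff.1 (mem_range.1 hk)
    rw [if_pos (Nat.le_add_right m k), Nat.add_sub_cancel_left,
      show m + (m + 1) - (m + k + 1) = m - k by omega]
    push_cast
    ring

theorem factorial_mul_factorial_div_factorial_two_mul_add_one {K : Type*} [Field K] [CharZero K]
    (m : ℕ) : (m ! * m ! / (2 * m + 1)! : K) = 1 / ((2 * m + 1) * (2 * m).choose m) := by
  have h := Nat.add_choose_mul_factorial_mul_factorial m m
  rw [← two_mul] at h
  have hc : ((2 * m).choose m : K) ≠ 0 := Nat.cast_ne_zero.2 (Nat.choose_pos (by omega)).ne'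
  have hf : ((2 * m)! : K) ≠ 0 := Nat.cast_ne_zero.2 (Nat.factorial_ne_zero _)
  have h2 : (2 * m + 1 : K) ≠ 0 := by exact_mod_cast (2 * m).succ_ne_zero
  have hm : (m ! : K) ≠ 0 := Nat.cast_ne_zero.2 (Nat.factorial_ne_zero _)
  rw [Nat.factorial_succ, ← h]
  push_cast
  field_simp

theorem sum_range_pow_mul_sub_pow (m n : ℕ) :
    ∑ k ∈ range n, (k : ℚ) ^ m * (n - k) ^ m
      = n ^ (2 * m + 1) / ((2 * m + 1) * (2 * m).choose m)
        + ∑ k ∈ range (m + 1),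
            m.choose k * (((-1) ^ m - (-1) ^ k) * bernoulli (m + k + 1) / (m + k + 1))
              * n ^ (m - k) := by
  have expand (k : ℕ) : (k : ℚ) ^ m * (n - k) ^ m
      = ∑ j ∈ range (m + 1),
          (-1) ^ j * m.choose j * (n : ℚ) ^ (m - j) * (k : ℚ) ^ (m + j) := by
    rw [sub_eq_neg_add, add_pow, mul_sum]
    refine sum_congr rfl fun j _ ↦ ?_
    rw [neg_pow, pow_add]
    ring
  have faulhaber (j : ℕ) : ∑ k ∈ range n, (k : ℚ) ^ (m + j)
      = ((Polynomial.bernoulli (m + j + 1)).eval (n : ℚ) - bernoulli (m + j + 1))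
          / (m + j + 1) := by
    rw [← Polynomial.sum_range_pow_eq_bernoulli_sub]
    push_cast
    rw [mul_div_cancel_left₀ _ (by positivity)]
  simp_rw [expand]
  rw [sum_comm]
  simp_rw [← mul_sum, faulhaber, mul_div_assoc', mul_sub, sub_div, sum_sub_distrib]
  rw [sum_neg_one_pow_mul_choose_mul_pow_mul_bernoulli_eval,
    factorial_mul_factorial_div_factorial_two_mul_add_one, mul_one_div, mul_sum, add_sub_assoc,
    ← sum_sub_distrib]
  congr 1
  refine sum_congr rfl fun k _ ↦ ?_
  ring

theorem neg_one_pow_sub_neg_one_pow_mul_bernoulli_div {m k : ℕ} (h : m + k ≠ 0) :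
    ((-1) ^ m - (-1) ^ k) * (bernoulli (m + k + 1) : ℂ) / (m + k + 1)
      = -2 * (-1) ^ m * riemannZeta (-m - k) := by
  rw [← neg_add', ← Nat.cast_add]
  -- Mathlib's two formulas for `ζ(-p)`, via `bernoulli` and via `bernoulli'`, together carry the
  -- vanishing of `B_{p+1}` for even `p ≥ 2`.
  have h1 := riemannZeta_neg_nat_eq_bernoulli (m + k)
  have h2 := riemannZeta_neg_nat_eq_bernoulli' (m + k)
  rw [← bernoulli_eq_bernoulli'_of_ne_one (by omega)] at h2
  have hs : (-1 : ℂ) ^ m * (-1) ^ m = 1 := by rw [← mul_pow]; norm_num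
  have hd : (m + k + 1 : ℂ) ≠ 0 := by exact_mod_cast (m + k).succ_ne_zero
  push_cast at h1 h2 ⊢
  rw [pow_add] at h1
  field_simp at h1 h2 ⊢
  linear_combination
    (-1 : ℂ) ^ m * h2 + (-1 : ℂ) ^ m * h1 + (-1 : ℂ) ^ k * bernoulli (m + k + 1) * hs

theorem stmt_3_general (m n : ℕ) (hm : 0 < m) :
    ∑ k ∈ Finset.Icc 1 (n - 1), (k : ℂ) ^ m * ((n : ℂ) - (k : ℂ)) ^ m
      = (n : ℂ) ^ (2 * m + 1) / ((2 * m + 1) * ((2 * m).choose m)) -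
        2 * (-1) ^ m *
          ∑ k ∈ Finset.range (m + 1),
            (m.choose k : ℂ) * riemannZeta (-(m : ℂ) - (k : ℂ)) * (n : ℂ) ^ (m - k) := by
  have hrange : ∑ k ∈ Icc 1 (n - 1), (k : ℂ) ^ m * ((n : ℂ) - (k : ℂ)) ^ m
      = ∑ k ∈ range n, (k : ℂ) ^ m * ((n : ℂ) - (k : ℂ)) ^ m := by
    rcases Nat.eq_zero_or_pos n with rfl | hn
    · simp
    · rw [range_eq_Ico, sum_eq_sum_Ico_succ_bot hn, ← Ico_add_one_right_eq_Icc,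
        Nat.sub_one_add_one hn.ne']
      simp [hm.ne']
  have hℚ := congrArg (Rat.cast : ℚ → ℂ) (sum_range_pow_mul_sub_pow m n)
  push_cast at hℚ
  rw [hrange, hℚ, sub_eq_add_neg, ← neg_mul, mul_sum]
  congr 1
  refine sum_congr rfl fun k _ ↦ ?_
  rw [neg_one_pow_sub_neg_one_pow_mul_bernoulli_div (by omega)]
  ring

theorem stmt_3 (m n : ℕ) (hm : 0 < m) (hn : 2 ≤ n) :
    ∑ k ∈ Finset.Icc 1 (n - 1), (k : ℂ) ^ m * ((n : ℂ) - (k : ℂ)) ^ m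
      = (n : ℂ) ^ (2 * m + 1) / ((2 * m + 1) * ((2 * m).choose m)) -
        2 * (-1) ^ m *
          ∑ k ∈ Finset.range (m + 1),
            (m.choose k : ℂ) * riemannZeta (-(m : ℂ) - (k : ℂ)) * (n : ℂ) ^ (m - k) :=
  stmt_3_general m n hm
end

section
/- For every positive natural number m and every complex number w, ∑_{k=0}^{m} C(m,k) · B_{m+k+1}((1−w)/2)/(m+k+1) · w^{m−k} = ((−1)^{m+1}/2) · w^{2m+1}/((2m+1)·C(2m,m)). -/
open Finset

/-- The `n`-th Bernoulli polynomial evaluated at a complex number `x`. -/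
noncomputable def bernoulliPolyC (n : ℕ) (x : ℂ) : ℂ :=
  ((Polynomial.bernoulli n).map (algebraMap ℚ ℂ)).eval x

/-!
Write `𝔅ₓ` for the linear functional `Xⁿ ↦ Bₙ(x)` on polynomials and `F(t) = ∫₀ᵗ sᵐ (s + w)ᵐ ds`,
so that the left-hand side is `𝔅ₓ F` at `x = 1/2 + r`, `r = -w/2`. The addition formula
`Bₙ(x + y) = ∑ⱼ C(n,j) Bⱼ(x) yⁿ⁻ʲ` turns this into `∑ⱼ Bⱼ(1/2) cⱼ`, where the `cⱼ` are the Taylor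
coefficients of `F` at `r`. As `F'(r + u) = (u² - w²/4)ᵐ` is even in `u`, `cⱼ = 0` for even `j ≥ 2`,
while `Bⱼ(1/2) = 0` for odd `j`; only `c₀ = F(r)` survives. The same oddness of `F(r + u) - F(r)`
gives `2 F(r) = F(-w) + F(0) = F(-w)`, and `F(-w) = (-1)ᵐ⁺¹ w²ᵐ⁺¹ m!²/(2m+1)!` is a Beta integral.
-/

open Nat

namespace Polynomial

theorem derivative_taylor {R : Type*} [CommSemiring R] (r : R) (P : R[X]) :
    derivative (taylor r P) = taylor r (derivative P) := by
  simp [taylor_apply, derivative_comp]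

section Bernoulli

variable {K : Type*} [Field K] [CharZero K]

theorem aeval_bernoulli_add (n : ℕ) (x y : K) :
    aeval (x + y) (bernoulli n)
      = ∑ j ∈ range (n + 1), (n.choose j : K) * aeval x (bernoulli j) * y ^ (n - j) := by
  have hexp : PowerSeries.exp K - 1 ≠ 0 := fun h => by
    simpa [PowerSeries.coeff_exp] using congrArg (PowerSeries.coeff 1) h
  have hgen : (PowerSeries.mk fun n => aeval (x + y) ((1 / n ! : ℚ) • bernoulli n))
      = (PowerSeries.mk fun n => aeval x ((1 / n ! : ℚ) • bernoulli n))
        * PowerSeries.rescale y (PowerSeries.exp K) := by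
    refine mul_right_cancel₀ hexp ?_
    rw [bernoulli_generating_function, mul_right_comm, bernoulli_generating_function, mul_assoc,
      PowerSeries.exp_mul_exp_eq_exp_add]
  have h := congrArg (PowerSeries.coeff n) hgen
  simp only [PowerSeries.coeff_mk, PowerSeries.coeff_mul, PowerSeries.coeff_rescale,
    PowerSeries.coeff_exp, Nat.sum_antidiagonal_eq_sum_range_succ_mk, map_smul] at h
  have hn : (n ! : K) ≠ 0 := mod_cast n.factorial_ne_zero
  calc aeval (x + y) (bernoulli n) = n ! * ((1 / n ! : ℚ) • aeval (x + y) (bernoulli n)) := by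
        simp only [Algebra.smul_def, map_div₀, map_one, map_natCast]
        field_simp
    _ = _ := by
      rw [h, mul_sum]
      refine sum_congr rfl fun j hj => ?_
      rw [cast_choose K (mem_range_succ_iff.mp hj)]
      simp only [Algebra.smul_def, map_div₀, map_one, map_natCast]
      field_simp

theorem aeval_bernoulli_half_of_odd {n : ℕ} (hn : Odd n) : aeval (2⁻¹ : K) (bernoulli n) = 0 := by
  have h := bernoulli_eval_one_sub n 2⁻¹
  rw [show (1 : ℚ) - 2⁻¹ = 2⁻¹ by norm_num, hn.neg_one_pow, neg_one_mul, self_eq_neg] at h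
  rw [show (2⁻¹ : K) = algebraMap ℚ K 2⁻¹ by simp, aeval_algebraMap_apply_eq_algebraMap_eval, h,
    map_zero]

noncomputable def bernoulliEval (x : K) : K[X] →ₗ[K] K :=
  lsum fun n => LinearMap.toSpanSingleton K K (aeval x (bernoulli n))

@[simp]
theorem bernoulliEval_monomial (x : K) (n : ℕ) (a : K) :
    bernoulliEval x (monomial n a) = a * aeval x (bernoulli n) := by
  simp [bernoulliEval]

theorem bernoulliEval_add (x y : K) (P : K[X]) :
    bernoulliEval (x + y) P = bernoulliEval x (taylor y P) := by
  induction P using Polynomial.induction_on' with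
  | add P Q hP hQ => rw [map_add, map_add, map_add, hP, hQ]
  | monomial n a =>
    rw [bernoulliEval_monomial, taylor_monomial, add_pow, aeval_bernoulli_add, mul_sum, mul_sum,
      map_sum]
    refine sum_congr rfl fun j _ => ?_
    rw [show C a * (X ^ j * C y ^ (n - j) * (n.choose j : K[X]))
        = monomial j (a * n.choose j * y ^ (n - j)) by
      rw [← C_mul_X_pow_eq_monomial]; simp only [map_mul, map_pow, map_natCast]; ring,
      bernoulliEval_monomial]
    ring

variable {P Q : K[X]} {r : K}

theorem coeff_taylor_eq_zero_of_even (h : taylor r (derivative P) = expand K 2 Q) {j : ℕ}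
    (hj : Even j) (hj0 : j ≠ 0) : (taylor r P).coeff j = 0 := by
  obtain ⟨i, rfl⟩ := Nat.exists_eq_add_one_of_ne_zero hj0
  have hi : ¬ 2 ∣ i := by rw [← even_iff_two_dvd]; exact Nat.even_add_one.mp hj
  have := congrArg (coeff · i) (derivative_taylor r P ▸ h)
  simp only [coeff_derivative, coeff_expand two_pos, if_neg hi] at this
  exact (mul_eq_zero.mp this).resolve_right (Nat.cast_add_one_ne_zero i)

theorem bernoulliEval_half_add_eq_eval (h : taylor r (derivative P) = expand K 2 Q) :
    bernoulliEval (2⁻¹ + r) P = P.eval r := by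
  rw [bernoulliEval_add, ← taylor_coeff_zero, bernoulliEval, lsum_apply, sum_def]
  refine (sum_eq_single 0 (fun j _ hj0 => ?_) (fun h0 => ?_)).trans ?_
  · rcases j.even_or_odd with hj | hj
    · simp [coeff_taylor_eq_zero_of_even h hj hj0]
    · simp [aeval_bernoulli_half_of_odd hj]
  · simp [notMem_support_iff.mp h0]
  · simp

theorem eval_add_add_eval_sub (h : taylor r (derivative P) = expand K 2 Q) (u : K) :
    P.eval (r + u) + P.eval (r - u) = 2 * P.eval r := by
  rw [add_comm r, sub_eq_neg_add, ← taylor_eval, ← taylor_eval,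
    ← taylor_coeff_zero (r := r) (f := P), eval_eq_sum, eval_eq_sum, sum_def, sum_def,
    ← sum_add_distrib]
  refine (sum_eq_single 0 (fun j _ hj0 => ?_) (fun h0 => ?_)).trans ?_
  · rcases j.even_or_odd with hj | hj
    · simp [coeff_taylor_eq_zero_of_even h hj hj0]
    · rw [hj.neg_pow]; ring
  · simp [notMem_support_iff.mp h0]
  · ring

end Bernoulli

section Beta

variable {K : Type*} [Field K]

noncomputable def betaPoly (m : ℕ) (w : K) : K[X] :=
  ∑ k ∈ range (m + 1), monomial (m + k + 1) ((m.choose k : K) * w ^ (m - k) / (m + k + 1))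

theorem betaPoly_eval_zero (m : ℕ) (w : K) : (betaPoly m w).eval 0 = 0 := by
  simp [betaPoly, eval_finsetSum]

variable [CharZero K]

theorem derivative_betaPoly (m : ℕ) (w : K) :
    derivative (betaPoly m w) = X ^ m * (X + C w) ^ m := by
  rw [betaPoly, derivative_sum, add_pow, mul_sum]
  refine sum_congr rfl fun k _ => ?_
  have : (m + k + 1 : K) ≠ 0 := mod_cast (m + k).succ_ne_zero
  rw [derivative_monomial, Nat.add_sub_cancel]
  push_cast
  rw [div_mul_cancel₀ _ this, ← C_mul_X_pow_eq_monomial]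
  simp only [map_mul, map_pow, map_natCast]
  ring

theorem taylor_derivative_betaPoly (m : ℕ) (w : K) :
    taylor (-(w / 2)) (derivative (betaPoly m w)) = expand K 2 ((X - C ((w / 2) ^ 2)) ^ m) := by
  have hw : C w = 2 * C (w / 2) := by rw [← map_ofNat C 2, ← map_mul]; ring_nf
  rw [derivative_betaPoly, taylor_mul, taylor_pow, taylor_pow, map_add, taylor_X, taylor_C,
    map_pow, map_sub, expand_X, expand_C, ← mul_pow]
  congr 1
  simp only [map_neg, map_pow]
  linear_combination (X - C (w / 2)) * hw

theorem sum_choose_mul_neg_one_pow_div (m n : ℕ) :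
    ∑ k ∈ range (m + 1), (m.choose k : K) * (-1) ^ k / (n + k + 1)
      = m ! * n ! / (m + n + 1)! := by
  induction m generalizing n with
  | zero =>
    have : (n ! : K) ≠ 0 := mod_cast n.factorial_ne_zero
    rw [sum_range_one, zero_add, factorial_succ, choose_self, factorial_zero]
    push_cast
    field_simp
    ring
  | succ m ih =>
    have hsplit := sum_choose_succ_mul (fun i _ => (-1 : K) ^ i / (n + i + 1)) m
    have hshift : ∀ i ∈ range (m + 1), (m.choose i : K) * ((-1) ^ (i + 1) / (n + ↑(i + 1) + 1))
        = -((m.choose i : K) * ((-1) ^ i / ((n + 1 : ℕ) + i + 1))) := fun i _ => by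
      push_cast; ring
    simp only [mul_div_assoc] at ih ⊢
    rw [hsplit, sum_congr rfl hshift, sum_neg_distrib, ih n, ih (n + 1),
      show m + (n + 1) + 1 = m + n + 1 + 1 by ring, show m + 1 + n + 1 = m + n + 1 + 1 by ring,
      factorial_succ (m + n + 1), factorial_succ n, factorial_succ m]
    have : ((m + n + 1)! : K) ≠ 0 := mod_cast (m + n + 1).factorial_ne_zero
    have : (m + n + 1 + 1 : K) ≠ 0 := mod_cast (m + n + 1).succ_ne_zero
    push_cast
    field_simp
    ring

theorem betaPoly_eval_neg (m : ℕ) (w : K) :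
    (betaPoly m w).eval (-w) = (-1) ^ (m + 1) * w ^ (2 * m + 1) * (m ! * m ! / (2 * m + 1)!) := by
  rw [two_mul, ← sum_choose_mul_neg_one_pow_div, betaPoly, eval_finsetSum, mul_sum]
  refine sum_congr rfl fun k hk => ?_
  have hw : w ^ (m + m + 1) = w ^ (m - k) * w ^ (m + k + 1) := by
    rw [← pow_add]; congr 1; have := mem_range_succ_iff.mp hk; omega
  rw [eval_monomial, neg_pow, hw]
  ring

theorem bernoulliEval_betaPoly (m : ℕ) (w x : K) :
    bernoulliEval x (betaPoly m w) = ∑ k ∈ range (m + 1),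
      (m.choose k : K) * (aeval x (bernoulli (m + k + 1)) / (m + k + 1)) * w ^ (m - k) := by
  rw [betaPoly, map_sum]
  refine sum_congr rfl fun k _ => ?_
  rw [bernoulliEval_monomial]
  ring

end Beta

end Polynomial

open Polynomial in
theorem stmt_4_general (m : ℕ) (w : ℂ) :
    ∑ k ∈ Finset.range (m + 1),
        (m.choose k : ℂ) * (bernoulliPolyC (m + k + 1) ((1 - w) / 2) / (m + k + 1))
          * w ^ (m - k)
      = (-1) ^ (m + 1) / 2 * (w ^ (2 * m + 1) / ((2 * m + 1) * ((2 * m).choose m))) := by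
  have hsymm := taylor_derivative_betaPoly m w
  have hdouble := eval_add_add_eval_sub hsymm (-(w / 2))
  rw [show -(w / 2) + -(w / 2) = -w by ring, sub_self, betaPoly_eval_neg, betaPoly_eval_zero]
    at hdouble
  simp only [bernoulliPolyC, eval_map_algebraMap]
  rw [← bernoulliEval_betaPoly, show (1 - w) / 2 = 2⁻¹ + -(w / 2) by ring,
    bernoulliEval_half_add_eq_eval hsymm]
  have hchoose := choose_mul_factorial_mul_factorial (show m ≤ 2 * m by omega)
  rw [show 2 * m - m = m by omega] at hchoose
  rw [factorial_succ, ← hchoose] at hdouble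
  have : (m ! : ℂ) ≠ 0 := mod_cast m.factorial_ne_zero
  have : ((2 * m).choose m : ℂ) ≠ 0 := mod_cast (choose_pos (show m ≤ 2 * m by omega)).ne'
  have : (2 * m + 1 : ℂ) ≠ 0 := mod_cast (2 * m).succ_ne_zero
  push_cast at hdouble
  field_simp at hdouble ⊢
  linear_combination -hdouble

theorem stmt_4 (m : ℕ) (hm : 0 < m) (w : ℂ) :
    ∑ k ∈ Finset.range (m + 1),
        (m.choose k : ℂ) * (bernoulliPolyC (m + k + 1) ((1 - w) / 2) / (m + k + 1))
          * w ^ (m - k)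
      = (-1) ^ (m + 1) / 2 * (w ^ (2 * m + 1) / ((2 * m + 1) * ((2 * m).choose m))) :=
  stmt_4_general m w
end

section
/- For all natural numbers k, ℓ ≥ 1 and all complex numbers x, y, z with x + y + z = 1, the following symmetric identity holds: (−1)^k · ∑_{j=0}^{k} C(k,j) · x^{k−j} · B_{ℓ+j+1}(y)/(ℓ+j+1) + (−1)^ℓ · ∑_{j=0}^{ℓ} C(ℓ,j) · x^{ℓ−j} · B_{k+j+1}(z)/(k+j+1) = (−x)^{k+ℓ+1}/((k+ℓ+1)·C(k+ℓ,k)). -/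
open Finset

open Polynomial
open scoped Nat

/-!
As a function of `y` (with `z = 1 - x - y`) the left-hand side is a polynomial, and it is
`1`-periodic: by `B_{n+1}(t + 1) - B_{n+1}(t) = (n + 1) tⁿ` and the binomial theorem, shifting `y`
changes the two sums by `(-1)^k y^ℓ (y + x)^k` and by its negative. A periodic polynomial is
constant, hence equal to its integral over `[0, 1]`. Bernoulli polynomials of positive degree
integrate to `0`, and the reflected ones `B_{n}(1 - x - y)` integrate to `(-x)^n`, which leaves
the beta integral `∑ⱼ (-1)ʲ C(ℓ, j) / (k + j + 1) = k! ℓ! / (k + ℓ + 1)!`.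
-/

theorem sum_range_choose_mul_neg_one_pow_div_s8 {K : Type*} [Field K] [CharZero K] (k l : ℕ) :
    ∑ j ∈ range (l + 1), (l.choose j : K) * ((-1) ^ j / (k + j + 1)) =
      k ! * l ! / (k + l + 1)! := by
  induction l generalizing k with
  | zero =>
    have : (k ! : K) ≠ 0 := by exact_mod_cast k.factorial_ne_zero
    simp [Nat.factorial_succ, field]
  | succ l ih =>
    have hpascal := sum_choose_succ_mul (fun i _ => ((-1 : K) ^ i / (k + i + 1))) l
    have hshift : ∀ i, (-1 : K) ^ (i + 1) / (k + ((i + 1 : ℕ) : K) + 1) =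
        -((-1) ^ i / ((k + 1 : ℕ) + i + 1)) := by
      intro i; push_cast; ring
    simp only [hshift, mul_neg, sum_neg_distrib] at hpascal
    rw [hpascal, ih, ih, ← sub_eq_add_neg, show k + 1 + l + 1 = k + (l + 1) + 1 by ring]
    have hfac : ((k + (l + 1) + 1)! : K) = (k + l + 2) * (k + l + 1)! := by
      push_cast [show k + (l + 1) + 1 = (k + l + 1) + 1 by ring, Nat.factorial_succ]; ring
    have : ((k + l + 1)! : K) ≠ 0 := by exact_mod_cast (k + l + 1).factorial_ne_zero
    have : (k : K) + l + 2 ≠ 0 := by norm_cast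
    rw [hfac]
    push_cast [Nat.factorial_succ]
    field_simp
    ring

namespace Polynomial

variable {K : Type*} [Field K]

/-- `∫₀¹ p`, computed termwise from `∫₀¹ Xⁿ = 1 / (n + 1)`. -/
noncomputable def unitIntegral : K[X] →ₗ[K] K :=
  lsum fun n => ((n : K) + 1)⁻¹ • LinearMap.id

theorem unitIntegral_monomial (n : ℕ) (a : K) : unitIntegral (monomial n a) = a / (n + 1) := by
  rw [unitIntegral, lsum_apply, sum_monomial_index _ _ (by simp)]
  simp [div_eq_inv_mul]

theorem unitIntegral_C (c : K) : unitIntegral (C c) = c := by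
  simpa using unitIntegral_monomial 0 c

variable [CharZero K]

theorem unitIntegral_derivative (q : K[X]) :
    unitIntegral (derivative q) = q.eval 1 - q.eval 0 := by
  induction q using Polynomial.induction_on' with
  | add p q hp hq => simp only [map_add, hp, hq, eval_add]; ring
  | monomial n a =>
    rw [derivative_monomial, unitIntegral_monomial]
    cases n with
    | zero => simp
    | succ n =>
      have : (n : K) + 1 ≠ 0 := n.cast_add_one_ne_zero
      simp [field]

theorem eq_C_eval_of_periodic {P : K[X]} (hP : ∀ t, P.eval (t + 1) = P.eval t) (a : K) :
    P = C (P.eval a) := by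
  have hroots : ∀ n : ℕ, (P - C (P.eval a)).IsRoot (a + n) := by
    intro n
    induction n with
    | zero => simp
    | succ n ih => simpa [← add_assoc, hP] using ih
  refine sub_eq_zero.mp (eq_zero_of_infinite_isRoot _ ?_)
  exact Set.infinite_of_injective_forall_mem (fun m n h => by simpa using h) hroots

theorem eval_eq_unitIntegral_of_periodic {P : K[X]} (hP : ∀ t, P.eval (t + 1) = P.eval t)
    (a : K) : P.eval a = unitIntegral P := by
  rw [eq_C_eval_of_periodic hP a, unitIntegral_C, eval_C]

variable (K) in
noncomputable def bernoulliPoly (n : ℕ) : K[X] := (bernoulli n).map (algebraMap ℚ K)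

theorem bernoulliPoly_eval_add_one (n : ℕ) (t : K) :
    (bernoulliPoly K n).eval (t + 1) = (bernoulliPoly K n).eval t + n * t ^ (n - 1) := by
  have h := congrArg (aeval t) (bernoulli_comp_one_add_X n)
  simpa [bernoulliPoly, eval_map_algebraMap, aeval_comp, add_comm] using h

theorem derivative_bernoulliPoly_succ (n : ℕ) :
    derivative (bernoulliPoly K (n + 1)) = ((n : K) + 1) • bernoulliPoly K n := by
  simp [bernoulliPoly, derivative_map, derivative_bernoulli_add_one, smul_eq_C_mul]

theorem unitIntegral_bernoulliPoly {n : ℕ} (hn : n ≠ 0) :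
    unitIntegral (bernoulliPoly K n) = 0 := by
  have h := unitIntegral_derivative (bernoulliPoly K (n + 1))
  rw [derivative_bernoulliPoly_succ, map_smul, smul_eq_mul, ← zero_add (1 : K),
    bernoulliPoly_eval_add_one] at h
  simpa [hn, n.cast_add_one_ne_zero] using h

theorem unitIntegral_bernoulliPoly_comp (n : ℕ) (w : K) :
    unitIntegral ((bernoulliPoly K n).comp (C w - X)) = (w - 1) ^ n := by
  have hderiv : derivative ((bernoulliPoly K (n + 1)).comp (C w - X)) =
      -(((n : K) + 1) • (bernoulliPoly K n).comp (C w - X)) := by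
    simp [derivative_comp, derivative_bernoulliPoly_succ, smul_comp]
  have h := unitIntegral_derivative ((bernoulliPoly K (n + 1)).comp (C w - X))
  simp only [hderiv, map_neg, map_smul, smul_eq_mul, eval_comp, eval_sub, eval_C, eval_X,
    sub_zero] at h
  have hstep := bernoulliPoly_eval_add_one (n + 1) (w - 1)
  rw [sub_add_cancel, add_tsub_cancel_right] at hstep
  have : (n : K) + 1 ≠ 0 := n.cast_add_one_ne_zero
  apply mul_left_cancel₀ this
  push_cast at hstep
  linear_combination -h + hstep

noncomputable def bernoulliBinomialSum (k m : ℕ) (x : K) : K[X] :=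
  ∑ j ∈ range (k + 1), ((k.choose j : K) * x ^ (k - j) / (m + j + 1)) • bernoulliPoly K (m + j + 1)

theorem bernoulliBinomialSum_eval_add_one (k m : ℕ) (x t : K) :
    (bernoulliBinomialSum k m x).eval (t + 1) =
      (bernoulliBinomialSum k m x).eval t + t ^ m * (t + x) ^ k := by
  have hbinom : t ^ m * (t + x) ^ k =
      ∑ j ∈ range (k + 1), (k.choose j : K) * x ^ (k - j) * t ^ (m + j) := by
    rw [add_pow, mul_sum]
    refine sum_congr rfl fun j _ => ?_
    ring
  simp only [bernoulliBinomialSum, eval_finsetSum, eval_smul, smul_eq_mul, hbinom,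
    ← sum_add_distrib, bernoulliPoly_eval_add_one]
  refine sum_congr rfl fun j _ => ?_
  have : (m : K) + j + 1 ≠ 0 := by norm_cast
  push_cast
  field_simp

theorem unitIntegral_bernoulliBinomialSum (k m : ℕ) (x : K) :
    unitIntegral (bernoulliBinomialSum k m x) = 0 := by
  simp [bernoulliBinomialSum, unitIntegral_bernoulliPoly]

theorem unitIntegral_bernoulliBinomialSum_comp (k m : ℕ) (x : K) :
    unitIntegral ((bernoulliBinomialSum k m x).comp (C (1 - x) - X)) =
      (-x) ^ (m + 1) * x ^ k / ((k + m + 1) * (k + m).choose m) := by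
  have hterm : ∀ j ∈ range (k + 1),
      (k.choose j : K) * x ^ (k - j) / (m + j + 1) * (-x) ^ (m + j + 1) =
        (-x) ^ (m + 1) * x ^ k * ((k.choose j : K) * ((-1) ^ j / (m + j + 1))) := by
    intro j hj
    obtain ⟨i, rfl⟩ := Nat.exists_eq_add_of_le (mem_range_succ_iff.mp hj)
    rw [Nat.add_sub_cancel_left, show m + j + 1 = (m + 1) + j by ring, pow_add, neg_pow x j]
    ring
  simp only [bernoulliBinomialSum, sum_comp, smul_comp, map_sum, map_smul,
    unitIntegral_bernoulliPoly_comp, sub_sub_cancel_left, smul_eq_mul]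
  rw [sum_congr rfl hterm, ← mul_sum, sum_range_choose_mul_neg_one_pow_div_s8,
    ← Nat.choose_symm_add, Nat.cast_add_choose, add_comm m k]
  have : ((k + m)! : K) ≠ 0 := by exact_mod_cast (k + m).factorial_ne_zero
  have : (k : K) + m + 1 ≠ 0 := by norm_cast
  push_cast [Nat.factorial_succ]
  field_simp

end Polynomial

theorem bernoulli_symmetric_identity {K : Type*} [Field K] [CharZero K] (k l : ℕ) (x y z : K)
    (hxyz : x + y + z = 1) :
    (-1) ^ k *
        (∑ j ∈ range (k + 1),
          (k.choose j : K) * x ^ (k - j) * ((bernoulliPoly K (l + j + 1)).eval y / (l + j + 1))) +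
      (-1) ^ l *
        (∑ j ∈ range (l + 1),
          (l.choose j : K) * x ^ (l - j) * ((bernoulliPoly K (k + j + 1)).eval z / (k + j + 1)))
      = (-x) ^ (k + l + 1) / ((k + l + 1) * ((k + l).choose k)) := by
  set P : K[X] := (-1 : K) ^ k • bernoulliBinomialSum k l x +
    (-1 : K) ^ l • (bernoulliBinomialSum l k x).comp (C (1 - x) - X)
  have hP : ∀ t, P.eval (t + 1) = P.eval t := by
    intro t
    have hsign : ((-1 : K) ^ l) * (-1) ^ l = 1 := by rw [← mul_pow, neg_one_mul, neg_neg, one_pow]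
    simp only [P, eval_add, eval_smul, eval_comp, eval_sub, eval_C, eval_X, smul_eq_mul,
      bernoulliBinomialSum_eval_add_one, show 1 - x - t = -(t + x) + 1 by ring,
      show 1 - x - (t + 1) = -(t + x) by ring, neg_pow (t + x)]
    linear_combination (-(-1) ^ k * t ^ l * (t + x) ^ k) * hsign
  have hz : z = 1 - x - y := by linear_combination hxyz
  calc _ = P.eval y := by
        simp only [P, bernoulliBinomialSum, eval_add, eval_smul, eval_comp, eval_finsetSum,
          smul_eq_mul, eval_sub, eval_C, eval_X, hz]
        congr 2 <;> exact sum_congr rfl fun j _ => by ring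
    _ = unitIntegral P := eval_eq_unitIntegral_of_periodic hP y
    _ = _ := by
        rw [map_add, map_smul, map_smul, unitIntegral_bernoulliBinomialSum,
          unitIntegral_bernoulliBinomialSum_comp, add_comm l k]
        simp only [smul_eq_mul, mul_zero, zero_add]
        ring

theorem stmt_8_general (k l : ℕ) (x y z : ℂ) (hxyz : x + y + z = 1) :
    (-1) ^ k *
        (∑ j ∈ Finset.range (k + 1),
          (k.choose j : ℂ) * x ^ (k - j) * (bernoulliPolyC (l + j + 1) y / (l + j + 1))) +
      (-1) ^ l *
        (∑ j ∈ Finset.range (l + 1),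
          (l.choose j : ℂ) * x ^ (l - j) * (bernoulliPolyC (k + j + 1) z / (k + j + 1)))
      = (-x) ^ (k + l + 1) / ((k + l + 1) * ((k + l).choose k)) :=
  bernoulli_symmetric_identity k l x y z hxyz

theorem stmt_8 (k l : ℕ) (hk : 1 ≤ k) (hl : 1 ≤ l) (x y z : ℂ) (hxyz : x + y + z = 1) :
    (-1) ^ k *
        (∑ j ∈ Finset.range (k + 1),
          (k.choose j : ℂ) * x ^ (k - j) * (bernoulliPolyC (l + j + 1) y / (l + j + 1))) +
      (-1) ^ l *
        (∑ j ∈ Finset.range (l + 1),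
          (l.choose j : ℂ) * x ^ (l - j) * (bernoulliPolyC (k + j + 1) z / (k + j + 1)))
      = (-x) ^ (k + l + 1) / ((k + l + 1) * ((k + l).choose k)) :=
  stmt_8_general k l x y z hxyz
end

section
/- For every positive natural number m and every complex number w, ∑_{k=0}^{m} C(m,k) · B_{m+k+1}(−w/2)/(m+k+1) · w^{m−k} = ((−1)^{m+1}/2^{2m+1}) · ( (2w)^{2m+1}/(2(2m+1)·C(2m,m)) + w^{2m} ). -/
open Finset

section Aux
open Polynomial

noncomputable def Bc (n : ℕ) : ℚ[X] := (Polynomial.bernoulli n).comp (C (-(1:ℚ)/2) * X)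

noncomputable def Lp (m : ℕ) : ℚ[X] :=
  ∑ k ∈ Finset.range (m+1),
    C ((m.choose k : ℚ) / ((m:ℚ)+k+1)) * Bc (m+k+1) * X ^ (m-k)

noncomputable def Gp (m : ℕ) : ℚ[X] :=
  C (((-1)^(m+1) / 2^(2*m+1) : ℚ)) *
    (C ((2^(2*m+1) / (2*(2*(m:ℚ)+1)*(((2*m).choose m : ℕ)) ) : ℚ)) * X^(2*m+1) + X^(2*m))

lemma hBc_der (n : ℕ) : derivative (Bc (n+1)) = C (-((n:ℚ)+1)/2) * Bc n := by
  rw [Bc, derivative_comp, Polynomial.derivative_bernoulli_add_one]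
  have h : derivative (C (-(1:ℚ)/2) * X) = C (-(1:ℚ)/2) := by simp
  rw [h, mul_comp, add_comp, natCast_comp, one_comp, Bc]
  have : ((n : ℚ[X]) + 1) = C ((n:ℚ)+1) := by rw [map_add, map_one, C_eq_natCast]
  rw [this, ← mul_assoc, ← C_mul]
  congr 1
  ring


lemma scalarL (m : ℕ) (B : ℕ → ℚ) (x : ℚ) :
    ∑ k ∈ range (m+2),
      ( -(((m+1).choose k:ℚ))/2 * B (m+1+k) * x^(m+1-k)
        + ((m+1).choose k:ℚ)/((m:ℚ)+1+k+1) * ((m+1-k : ℕ):ℚ) * B (m+2+k) * x^(m-k) )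
    = -((m:ℚ)+1)/2 * x * ∑ k ∈ range (m+1), (m.choose k:ℚ)/((m:ℚ)+k+1) * B (m+k+1) * x^(m-k) := by
  have hV : -((m:ℚ)+1)/2 * x * ∑ k ∈ range (m+1), (m.choose k:ℚ)/((m:ℚ)+k+1) * B (m+k+1) * x^(m-k)
      = ∑ k ∈ range (m+2), -((m:ℚ)+1)/2 * ((m.choose k:ℚ)/((m:ℚ)+k+1)) * B (m+k+1) * x^(m+1-k) := by
    rw [sum_range_succ (fun k => -((m:ℚ)+1)/2 * ((m.choose k:ℚ)/((m:ℚ)+k+1)) * B (m+k+1) * x^(m+1-k)) (m+1)]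
    simp only [Nat.choose_succ_self, Nat.cast_zero, zero_div, mul_zero, zero_mul, add_zero]
    rw [mul_sum]
    refine sum_congr rfl fun k hk => ?_
    have hk' : k ≤ m := by simpa [Nat.lt_succ_iff] using hk
    have he : m + 1 - k = (m - k) + 1 := by omega
    rw [he, pow_succ]
    ring
  have hT2zero : ((m+1).choose (m+1):ℚ)/((m:ℚ)+1+(m+1:ℕ)+1) * ((m+1-(m+1) : ℕ):ℚ) * B (m+2+(m+1)) * x^(m-(m+1)) = 0 := by
    simp
  rw [sum_add_distrib,
      sum_range_succ (fun k => ((m+1).choose k:ℚ)/((m:ℚ)+1+k+1) * ((m+1-k : ℕ):ℚ) * B (m+2+k) * x^(m-k)) (m+1),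
      hT2zero, add_zero,
      sum_range_succ' (fun k => -(((m+1).choose k:ℚ))/2 * B (m+1+k) * x^(m+1-k)) (m+1),
      hV,
      sum_range_succ' (fun k => -((m:ℚ)+1)/2 * ((m.choose k:ℚ)/((m:ℚ)+k+1)) * B (m+k+1) * x^(m+1-k)) (m+1)]
  have hmain : (∑ k ∈ range (m+1), -(((m+1).choose (k+1):ℚ))/2 * B (m+1+(k+1)) * x^(m+1-(k+1)))
      + ∑ k ∈ range (m+1), ((m+1).choose k:ℚ)/((m:ℚ)+1+(k:ℕ)+1) * ((m+1-k : ℕ):ℚ) * B (m+2+k) * x^(m-k)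
      = ∑ k ∈ range (m+1), -((m:ℚ)+1)/2 * ((m.choose (k+1):ℚ)/((m:ℚ)+(k+1:ℕ)+1)) * B (m+(k+1)+1) * x^(m+1-(k+1)) := by
    rw [← sum_add_distrib]
    refine sum_congr rfl fun k hk => ?_
    have hk' : k ≤ m := by simpa [Nat.lt_succ_iff] using hk
    have e1 : m + 1 + (k+1) = m + 2 + k := by omega
    have e2 : m + (k+1) + 1 = m + 2 + k := by omega
    have e3 : m + 1 - (k+1) = m - k := by omega
    rw [e1, e2, e3]
    have hc1 : ((m+1-k : ℕ):ℚ) = (m:ℚ) + 1 - k := by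
      rw [Nat.cast_sub (by omega)]; push_cast; ring
    rw [hc1]
    have h1q : (((m+1).choose (k+1):ℚ))*((k:ℚ)+1) = (((m+1).choose k:ℚ)) * ((m:ℚ)+1-(k:ℚ)) := by
      have h := congrArg (Nat.cast : ℕ → ℚ) (Nat.choose_succ_right_eq (m+1) k)
      push_cast at h
      rw [Nat.cast_sub (by omega)] at h
      push_cast at h
      exact h
    have h2q : ((m:ℚ)+1)*(m.choose k : ℚ) = ((m+1).choose (k+1):ℚ)*((k:ℚ)+1) := by
      have h := congrArg (Nat.cast : ℕ → ℚ) (Nat.add_one_mul_choose_eq m k)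
      push_cast at h
      exact h
    have h3q : ((m+1).choose (k+1):ℚ) = (m.choose k : ℚ) + (m.choose (k+1) : ℚ) := by
      have h := congrArg (Nat.cast : ℕ → ℚ) (Nat.choose_succ_succ m k)
      push_cast at h
      exact h
    have hD : (m:ℚ)+1+(k:ℚ)+1 ≠ 0 := by positivity
    push_cast
    field_simp
    linear_combination (2*h1q + h2q + ((m:ℚ)+1)*h3q) * (-(B (m+2+k) * x^(m-k))) * ((m:ℚ)+(k:ℚ)+2)
  have h0 : -(((m+1).choose 0:ℚ))/2 * B (m+1+0) * x^(m+1-0)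
      = -((m:ℚ)+1)/2 * ((m.choose 0:ℚ)/((m:ℚ)+(0:ℕ)+1)) * B (m+0+1) * x^(m+1-0) := by
    have hne : (m:ℚ)+1 ≠ 0 := by positivity
    simp only [Nat.choose_zero_right, Nat.cast_one, Nat.add_zero, Nat.cast_zero, add_zero]
    field_simp
  linear_combination hmain + h0

lemma lemL (m : ℕ) : derivative (Lp (m+1)) = C (-((m:ℚ)+1)/2) * (X * Lp m) := by
  apply Polynomial.funext; intro x
  have hBc_eval : ∀ n : ℕ, eval x (Bc n) = eval (-(1:ℚ)/2 * x) (Polynomial.bernoulli n) := by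
    intro n; rw [Bc, eval_comp]; simp
  have hL : eval x (derivative (Lp (m+1)))
      = ∑ k ∈ range (m+2),
        ( -(((m+1).choose k:ℚ))/2 * eval (-(1:ℚ)/2 * x) (Polynomial.bernoulli (m+1+k)) * x^(m+1-k)
          + ((m+1).choose k:ℚ)/((m:ℚ)+1+k+1) * ((m+1-k : ℕ):ℚ)
              * eval (-(1:ℚ)/2 * x) (Polynomial.bernoulli (m+2+k)) * x^(m-k) ) := by
    rw [Lp, derivative_sum, eval_finset_sum]
    refine sum_congr rfl fun k hk => ?_
    rw [derivative_mul, derivative_mul, derivative_C, zero_mul, zero_add,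
        hBc_der, derivative_X_pow]
    have e1 : m+1+k+1 = m+2+k := by omega
    have e2 : m+1-k-1 = m-k := by omega
    rw [e1, e2]
    simp only [eval_add, eval_mul, eval_C, eval_pow, eval_X, eval_natCast, hBc_eval]
    have hD : ((m:ℚ))+(k:ℚ)+2 ≠ 0 := by positivity
    push_cast
    field_simp
  have hR : eval x (C (-((m:ℚ)+1)/2) * (X * Lp m))
      = -((m:ℚ)+1)/2 * x * ∑ k ∈ range (m+1),
          (m.choose k:ℚ)/((m:ℚ)+k+1) * eval (-(1:ℚ)/2 * x) (Polynomial.bernoulli (m+k+1)) * x^(m-k) := by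
    rw [Lp]
    simp only [eval_mul, eval_C, eval_X, eval_pow, eval_finset_sum, hBc_eval]
    ring
  rw [hL, hR]
  exact scalarL m (fun n => eval (-(1:ℚ)/2 * x) (Polynomial.bernoulli n)) x

lemma lemG (m : ℕ) : derivative (Gp (m+1)) = C (-((m:ℚ)+1)/2) * (X * Gp m) := by
  apply Polynomial.funext; intro x
  have hcb : ((m:ℚ)+1) * (((2*m+2).choose (m+1) : ℕ):ℚ) = 2*(2*(m:ℚ)+1) * (((2*m).choose m : ℕ):ℚ) := by
    have h := congrArg (Nat.cast : ℕ → ℚ) (Nat.succ_mul_centralBinom_succ m)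
    simp only [Nat.centralBinom] at h
    have e : 2*(m+1) = 2*m+2 := by omega
    rw [e] at h
    push_cast at h
    linear_combination h
  have hne : (((2*m).choose m : ℕ):ℚ) ≠ 0 := Nat.cast_ne_zero.mpr (Nat.choose_pos (by omega)).ne'
  have hne2 : (((2*m+2).choose (m+1) : ℕ):ℚ) ≠ 0 := Nat.cast_ne_zero.mpr (Nat.choose_pos (by omega)).ne'
  have e3 : 2*(m+1)+1 = 2*m+3 := by omega
  have e4 : 2*(m+1) = 2*m+2 := by omega
  rw [Gp, Gp, e3, e4]
  simp only [derivative_mul, derivative_add, derivative_C, derivative_X_pow, zero_mul, zero_add,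
    eval_mul, eval_add, eval_C, eval_pow, eval_X, eval_natCast, Nat.add_sub_cancel]
  have h2m1 : 2*(m:ℚ)+1 ≠ 0 := by positivity
  have h2m3 : 2*(m:ℚ)+3 ≠ 0 := by positivity
  push_cast
  field_simp
  linear_combination (-(16:ℚ) * x^(2*m+2) * (-1:ℚ)^m * 2^(4*m) * (2*(m:ℚ)+3)) * hcb

lemma base0 : Lp 0 = Gp 0 := by
  apply Polynomial.funext; intro x
  simp [Lp, Gp, Bc, eval_comp, Polynomial.bernoulli, Finset.sum_range_succ, eval_monomial,
    _root_.bernoulli_zero, _root_.bernoulli_one]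
  ring

lemma Lp_eval_zero (m : ℕ) : (Lp (m+1)).eval 0 = 0 := by
  rw [Lp, eval_finset_sum]
  refine Finset.sum_eq_zero fun k hk => ?_
  by_cases hkm : k = m+1
  · subst hkm
    have hb : _root_.bernoulli (m+1+(m+1)+1) = 0 := by
      rw [bernoulli_eq_bernoulli'_of_ne_one (by omega)]
      exact bernoulli'_eq_zero_of_odd ⟨m+1, by omega⟩ (by omega)
    simp [Bc, eval_comp, Polynomial.bernoulli_eval_zero, hb]
  · have hk' : k < m+1 := by simp at hk; omega
    have : m+1-k ≠ 0 := by omega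
    simp [zero_pow this]

lemma Gp_eval_zero (m : ℕ) : (Gp (m+1)).eval 0 = 0 := by
  have h1 : 2*(m+1)+1 ≠ 0 := by omega
  have h2 : 2*(m+1) ≠ 0 := by omega
  simp [Gp, zero_pow h1, zero_pow h2]

lemma poly_ext {p q : ℚ[X]} (h : derivative p = derivative q) (h0 : p.eval 0 = q.eval 0) :
    p = q := by
  have hd : derivative (p - q) = 0 := by rw [derivative_sub, h, sub_self]
  have h2 := Polynomial.eq_C_of_derivative_eq_zero hd
  rw [Polynomial.coeff_zero_eq_eval_zero, eval_sub, h0, sub_self, map_zero] at h2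
  exact sub_eq_zero.mp h2

lemma LpGp : ∀ n, Lp n = Gp n := by
  intro n
  induction n with
  | zero => exact base0
  | succ k ih =>
    exact poly_ext (by rw [lemL, lemG, ih]) (by rw [Lp_eval_zero, Gp_eval_zero])

end Aux

open Polynomial in
theorem stmt_9 (m : ℕ) (hm : 0 < m) (w : ℂ) :
    ∑ k ∈ Finset.range (m + 1),
        (m.choose k : ℂ) * (bernoulliPolyC (m + k + 1) (-w / 2) / (m + k + 1)) * w ^ (m - k)
      = (-1) ^ (m + 1) / 2 ^ (2 * m + 1) *
          ((2 * w) ^ (2 * m + 1) / (2 * (2 * m + 1) * ((2 * m).choose m)) + w ^ (2 * m)) := by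
  have hbp : ∀ (n : ℕ) (z : ℂ), bernoulliPolyC n z = aeval z (Polynomial.bernoulli n) := by
    intro n z
    rw [bernoulliPolyC, aeval_def, eval_map]
  have hq : (aeval w (C (-(1:ℚ)/2) * X) : ℂ) = -w/2 := by
    rw [map_mul, aeval_C, aeval_X]
    rw [map_div₀, map_neg, map_one, map_ofNat]
    ring
  have hLm : ∑ k ∈ Finset.range (m + 1),
        (m.choose k : ℂ) * (bernoulliPolyC (m + k + 1) (-w / 2) / (m + k + 1)) * w ^ (m - k)
      = aeval w (Lp m) := by
    rw [Lp, map_sum]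
    refine Finset.sum_congr rfl fun k hk => ?_
    rw [map_mul, map_mul, aeval_C, map_pow, aeval_X, Bc, aeval_comp, hq, ← hbp]
    rw [map_div₀, map_natCast, map_add, map_add, map_natCast, map_natCast, map_one]
    push_cast
    ring
  have hcne : ((((2*m).choose m : ℕ)) : ℂ) ≠ 0 := Nat.cast_ne_zero.mpr (Nat.choose_pos (by omega)).ne'
  have h2m1 : (2*(m:ℂ)+1) ≠ 0 := by
    intro h
    have : (2*(m:ℝ)+1) = 0 := by exact_mod_cast congrArg Complex.re h
    nlinarith [Nat.cast_nonneg (α := ℝ) m]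
  have hGm : (aeval w (Gp m) : ℂ)
      = (-1) ^ (m + 1) / 2 ^ (2 * m + 1) *
          ((2 * w) ^ (2 * m + 1) / (2 * (2 * m + 1) * ((2 * m).choose m)) + w ^ (2 * m)) := by
    rw [Gp, map_mul, aeval_C, map_add, map_mul, aeval_C, map_pow, aeval_X, map_pow, aeval_X]
    rw [map_div₀, map_div₀, map_pow, map_pow, map_neg, map_one, map_ofNat, map_mul, map_mul,
      map_natCast, map_add, map_mul, map_natCast, map_one, map_ofNat]
    have : ((2:ℂ)*w)^(2*m+1) = 2^(2*m+1) * w^(2*m+1) := by rw [mul_pow]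
    rw [this]
    push_cast
    field_simp
  rw [hLm, LpGp, hGm]
end
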